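/- arXiv:1712.00540 — 2 statements merged into one kernel-verified Lean document; each statement's English description precedes it below -/
import Mathlib

section
/- Let λ_b > 0, t > 0, R_L > 0, antenna gains 0 < g_s ≤ g_m, and beamwidth θ ∈ (0, 2π], and set p_a := θ/(2π) + (1 − θ/(2π))·(g_s/g_m). For s ∈ [0, R_L] define S_r(s) := ∫₀^s 2πλ_b·r·exp(−πλ_b·r²·[1 + p_a·t·ln((t + s²/r²)/(1 + t)) + (g_s/g_m)·t·ln((t + R_L²/r²)/(t + s²/r²))]) dr + ∫_s^{R_L} 2πλ_b·r·exp(−πλ_b·r²·[1 + (g_s/g_m)·t·ln((t + R_L²/r²)/(1 + t))]) dr. Then S_r is monotone nonincreasing on [0, R_L]. -/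
/-!
Write `q = g_s/g_m` and `pa = p_a`, and split the coverage integral at the main-lobe radius `s`.
For fixed `r` the inner integrand decreases in `s`: its exponent depends on `s` only through
`(pa - q) t log (t + s²/r²)`, and `pa ≥ q` because `p_a` is a convex combination of `1` and `q`.
At `s = r` the inner integrand coincides with the outer one. Hence moving the split point from
`s₁` up to `s₂` lowers the integrand both on `[0, s₁]` and on `[s₁, s₂]`.
-/

open Real MeasureTheory Set

theorem monotoneOn_mul_log_div_add_mul_log_div {a b c d : ℝ} (hba : b ≤ a) (hc : c ≠ 0)
    (hd : d ≠ 0) : MonotoneOn (fun x => a * log (x / c) + b * log (d / x)) (Ioi 0) := by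
  intro x hx y hy hxy
  have hlog : log x ≤ log y := log_le_log hx hxy
  simp only
  rw [log_div hx.ne' hc, log_div hy.ne' hc, log_div hd hx.ne', log_div hd hy.ne']
  linarith [mul_le_mul_of_nonneg_left hlog (sub_nonneg.2 hba)]

theorem intervalIntegrable_of_nonneg_of_le_const_mul {f : ℝ → ℝ} {a b c : ℝ} (hab : a ≤ b)
    (hf : Measurable f) (hbound : ∀ r ∈ Ioc a b, 0 ≤ f r ∧ f r ≤ c * r) :
    IntervalIntegrable f volume a b := by
  refine IntervalIntegrable.mono_fun' ((continuous_const_mul c).intervalIntegrable a b)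
    hf.aestronglyMeasurable (ae_restrict_of_forall_mem measurableSet_uIoc fun r hr => ?_)
  rw [uIoc_of_le hab] at hr
  obtain ⟨hf₀, hfc⟩ := hbound r hr
  simpa only [Real.norm_of_nonneg hf₀] using hfc

noncomputable def innerIntegrand (lamb t RL pa q s r : ℝ) : ℝ :=
  2 * π * lamb * r *
    exp (-(π * lamb * r ^ 2 *
      (1 + pa * t * log ((t + s ^ 2 / r ^ 2) / (1 + t)) +
        q * t * log ((t + RL ^ 2 / r ^ 2) / (t + s ^ 2 / r ^ 2)))))

noncomputable def outerIntegrand (lamb t RL q r : ℝ) : ℝ :=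
  2 * π * lamb * r * exp (-(π * lamb * r ^ 2 * (1 + q * t * log ((t + RL ^ 2 / r ^ 2) / (1 + t)))))

noncomputable def farUserCoverage (lamb t RL pa q s : ℝ) : ℝ :=
  (∫ r in (0 : ℝ)..s, innerIntegrand lamb t RL pa q s r) +
    ∫ r in s..RL, outerIntegrand lamb t RL q r

section Integrands

variable {lamb t RL pa q : ℝ}

theorem innerIntegrand_antitoneOn (hlamb : 0 ≤ lamb) (ht : 0 < t) (hqpa : q ≤ pa) {r : ℝ}
    (hr : 0 ≤ r) : AntitoneOn (fun s => innerIntegrand lamb t RL pa q s r) (Ici 0) := by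
  rcases hr.eq_or_lt with rfl | hr
  · simp only [innerIntegrand, mul_zero, zero_mul]
    exact antitoneOn_const
  intro s hs s' hs' hss'
  have hx : t + s ^ 2 / r ^ 2 ≤ t + s' ^ 2 / r ^ 2 := by gcongr
  have hbracket := monotoneOn_mul_log_div_add_mul_log_div (c := 1 + t) (d := t + RL ^ 2 / r ^ 2)
    (mul_le_mul_of_nonneg_right hqpa ht.le) (by positivity) (by positivity)
    (show 0 < t + s ^ 2 / r ^ 2 by positivity) (show 0 < t + s' ^ 2 / r ^ 2 by positivity) hx
  simp only [innerIntegrand]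
  gcongr 2 * π * lamb * r * exp (-(π * lamb * r ^ 2 * ?_))
  linarith

theorem innerIntegrand_self (ht : 1 + t ≠ 0) (r : ℝ) :
    innerIntegrand lamb t RL pa q r r = outerIntegrand lamb t RL q r := by
  rcases eq_or_ne r 0 with rfl | hr
  · simp [innerIntegrand, outerIntegrand]
  rw [innerIntegrand, outerIntegrand, div_self (pow_ne_zero 2 hr), add_comm t 1, div_self ht,
    log_one, mul_zero, add_zero]

theorem innerIntegrand_le_outerIntegrand (hlamb : 0 ≤ lamb) (ht : 0 < t) (hqpa : q ≤ pa)
    {r s : ℝ} (hr : 0 ≤ r) (hrs : r ≤ s) :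
    innerIntegrand lamb t RL pa q s r ≤ outerIntegrand lamb t RL q r :=
  calc innerIntegrand lamb t RL pa q s r ≤ innerIntegrand lamb t RL pa q r r :=
        innerIntegrand_antitoneOn hlamb ht hqpa hr hr (hr.trans hrs) hrs
    _ = outerIntegrand lamb t RL q r := innerIntegrand_self (by positivity) r

theorem outerIntegrand_le (hlamb : 0 ≤ lamb) (ht : 0 < t) (hq : 0 ≤ q) {r : ℝ} (hr : 0 < r)
    (hrRL : r ≤ RL) : outerIntegrand lamb t RL q r ≤ 2 * π * lamb * r := by
  have hRL : 1 ≤ RL ^ 2 / r ^ 2 := (one_le_div (by positivity)).2 (by gcongr)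
  have hlog : 0 ≤ log ((t + RL ^ 2 / r ^ 2) / (1 + t)) :=
    log_nonneg ((one_le_div (by positivity)).2 (by linarith))
  refine mul_le_of_le_one_right (by positivity) (exp_le_one_iff.2 (neg_nonpos.2 ?_))
  positivity

theorem outerIntegrand_intervalIntegrable (hlamb : 0 ≤ lamb) (ht : 0 < t) (hq : 0 ≤ q)
    {a b : ℝ} (ha : 0 ≤ a) (hab : a ≤ b) (hbRL : b ≤ RL) :
    IntervalIntegrable (outerIntegrand lamb t RL q) volume a b :=
  intervalIntegrable_of_nonneg_of_le_const_mul hab (by unfold outerIntegrand; fun_prop)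
    fun r hr => ⟨by have := ha.trans hr.1.le; unfold outerIntegrand; positivity,
      outerIntegrand_le hlamb ht hq (ha.trans_lt hr.1) (hr.2.trans hbRL)⟩

theorem innerIntegrand_intervalIntegrable (hlamb : 0 ≤ lamb) (ht : 0 < t) (hq : 0 ≤ q)
    (hqpa : q ≤ pa) {a b s : ℝ} (ha : 0 ≤ a) (hab : a ≤ b) (hbs : b ≤ s) (hsRL : s ≤ RL) :
    IntervalIntegrable (innerIntegrand lamb t RL pa q s) volume a b :=
  intervalIntegrable_of_nonneg_of_le_const_mul hab (by unfold innerIntegrand; fun_prop)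
    fun r hr => ⟨by have := ha.trans hr.1.le; unfold innerIntegrand; positivity,
      (innerIntegrand_le_outerIntegrand hlamb ht hqpa (ha.trans hr.1.le) (hr.2.trans hbs)).trans
        (outerIntegrand_le hlamb ht hq (ha.trans_lt hr.1) (hr.2.trans (hbs.trans hsRL)))⟩

end Integrands

theorem farUserCoverage_antitoneOn {lamb t RL pa q : ℝ} (hlamb : 0 ≤ lamb) (ht : 0 < t)
    (hq : 0 ≤ q) (hqpa : q ≤ pa) : AntitoneOn (farUserCoverage lamb t RL pa q) (Icc 0 RL) := by
  rintro s₁ ⟨hs₁, -⟩ s₂ ⟨hs₂, hs₂RL⟩ h₁₂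
  have inner₂ := innerIntegrand_intervalIntegrable hlamb ht hq hqpa le_rfl hs₁ h₁₂ hs₂RL
  have inner₁₂ := innerIntegrand_intervalIntegrable hlamb ht hq hqpa hs₁ h₁₂ le_rfl hs₂RL
  have outer₁₂ := outerIntegrand_intervalIntegrable hlamb ht hq hs₁ h₁₂ hs₂RL
  calc farUserCoverage lamb t RL pa q s₂
      = (∫ r in (0 : ℝ)..s₁, innerIntegrand lamb t RL pa q s₂ r) +
          (∫ r in s₁..s₂, innerIntegrand lamb t RL pa q s₂ r) +
          ∫ r in s₂..RL, outerIntegrand lamb t RL q r := by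
        rw [farUserCoverage, intervalIntegral.integral_add_adjacent_intervals inner₂ inner₁₂]
    _ ≤ (∫ r in (0 : ℝ)..s₁, innerIntegrand lamb t RL pa q s₁ r) +
          (∫ r in s₁..s₂, outerIntegrand lamb t RL q r) +
          ∫ r in s₂..RL, outerIntegrand lamb t RL q r := by
        gcongr ?_ + ?_ + _
        · exact intervalIntegral.integral_mono_on hs₁ inner₂
            (innerIntegrand_intervalIntegrable hlamb ht hq hqpa le_rfl hs₁ le_rfl (h₁₂.trans hs₂RL))
            fun r hr => innerIntegrand_antitoneOn hlamb ht hqpa hr.1 hs₁ hs₂ h₁₂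
        · exact intervalIntegral.integral_mono_on h₁₂ inner₁₂ outer₁₂
            fun r hr => innerIntegrand_le_outerIntegrand hlamb ht hqpa (hs₁.trans hr.1) hr.2
    _ = farUserCoverage lamb t RL pa q s₁ := by
        rw [farUserCoverage, add_assoc, intervalIntegral.integral_add_adjacent_intervals outer₁₂
          (outerIntegrand_intervalIntegrable hlamb ht hq hs₂ hs₂RL le_rfl)]

theorem sir_coverage_far_user_antitone_general (lamb t RL gs gm θ : ℝ)
    (hlamb : 0 < lamb) (ht : 0 < t) (hgs : 0 < gs) (hgsgm : gs ≤ gm)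
    (hθ : θ ∈ Set.Ioc 0 (2 * π)) :
    AntitoneOn (fun s : ℝ =>
      (∫ r in (0 : ℝ)..s, 2 * π * lamb * r *
        Real.exp (-(π * lamb * r ^ 2 *
          (1 + (θ / (2 * π) + (1 - θ / (2 * π)) * (gs / gm)) * t *
              Real.log ((t + s ^ 2 / r ^ 2) / (1 + t)) +
            (gs / gm) * t *
              Real.log ((t + RL ^ 2 / r ^ 2) / (t + s ^ 2 / r ^ 2)))))) +
      ∫ r in s..RL, 2 * π * lamb * r *
        Real.exp (-(π * lamb * r ^ 2 *
          (1 + (gs / gm) * t * Real.log ((t + RL ^ 2 / r ^ 2) / (1 + t))))))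
      (Set.Icc 0 RL) := by
  have hgm : 0 < gm := hgs.trans_le hgsgm
  have hq : 0 ≤ gs / gm := (div_pos hgs hgm).le
  have hq₁ : gs / gm ≤ 1 := (div_le_one hgm).2 hgsgm
  have hθ₀ : 0 ≤ θ / (2 * π) := div_nonneg hθ.1.le (by positivity)
  have hqpa : gs / gm ≤ θ / (2 * π) + (1 - θ / (2 * π)) * (gs / gm) := by
    nlinarith [mul_nonneg hθ₀ (sub_nonneg.2 hq₁)]
  exact farUserCoverage_antitoneOn hlamb.le ht hq hqpa

/-- Remark 1 for `γ_c = 0` (α = 2 closed form of Proposition 1, eq. (4)): the SIR coverage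
of a far-from-building user, as a function of the main-lobe interference radius
`s = R_β`, is nonincreasing on `[0, R_L]`; since `R_β` decreases in the bias `β`, coverage
increases with `β`. Here `p_a = θ/(2π) + (1 − θ/(2π))(g_s/g_m)`. -/
theorem sir_coverage_far_user_antitone (lamb t RL gs gm θ : ℝ)
    (hlamb : 0 < lamb) (ht : 0 < t) (hRL : 0 < RL) (hgs : 0 < gs) (hgsgm : gs ≤ gm)
    (hθ : θ ∈ Set.Ioc 0 (2 * π)) :
    AntitoneOn (fun s : ℝ =>
      (∫ r in (0 : ℝ)..s, 2 * π * lamb * r *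
        Real.exp (-(π * lamb * r ^ 2 *
          (1 + (θ / (2 * π) + (1 - θ / (2 * π)) * (gs / gm)) * t *
              Real.log ((t + s ^ 2 / r ^ 2) / (1 + t)) +
            (gs / gm) * t *
              Real.log ((t + RL ^ 2 / r ^ 2) / (t + s ^ 2 / r ^ 2)))))) +
      ∫ r in s..RL, 2 * π * lamb * r *
        Real.exp (-(π * lamb * r ^ 2 *
          (1 + (gs / gm) * t * Real.log ((t + RL ^ 2 / r ^ 2) / (1 + t))))))
      (Set.Icc 0 RL) :=
  sir_coverage_far_user_antitone_general lamb t RL gs gm θ hlamb ht hgs hgsgm hθ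
end

section
/- Let λ_b > 0, t > 0, 0 ≤ R_β ≤ R_L, 0 < g_s ≤ g_m, and θ ∈ (0, 2π]. For α > 2 set p_a(α) := θ/(2π) + (1 − θ/(2π))·(g_s/g_m)^{2/α} and define G(α) := ∫₀^{R_β} 2πλ_b·r·exp(−πλ_b·r²·[1 + p_a(α)·t^{2/α}·∫_{t^{−2/α}}^{R_β²/(r²·t^{2/α})} (1 + u^{α/2})^{−1} du + (g_s·t/g_m)^{2/α}·∫_{R_β²/(r²·t^{2/α})}^{R_L²/(r²·t^{2/α})} (1 + u^{α/2})^{−1} du]) dr + ∫_{R_β}^{R_L} 2πλ_b·r·exp(−πλ_b·r²·[1 + (g_s·t/g_m)^{2/α}·∫_{t^{−2/α}}^{R_L²/(r²·t^{2/α})} (1 + u^{α/2})^{−1} du]) dr. Then, as α → 2 from the right, G(α) converges to ∫₀^{R_β} 2πλ_b·r·exp(−πλ_b·r²·[1 + p_a(2)·t·ln((t + R_β²/r²)/(1 + t)) + (g_s/g_m)·t·ln((t + R_L²/r²)/(t + R_β²/r²))]) dr + ∫_{R_β}^{R_L} 2πλ_b·r·exp(−πλ_b·r²·[1 + (g_s/g_m)·t·ln((t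 + R_L²/r²)/(1 + t))]) dr, where p_a(2) = θ/(2π) + (1 − θ/(2π))·(g_s/g_m). -/
open Real Filter


open Real Filter MeasureTheory intervalIntegral Set

namespace SirCovAux

/-- The substituted inner integrand. -/
noncomputable def g (t α v : ℝ) : ℝ := (1 + |v| ^ (α / 2) / t)⁻¹

/-- The substituted inner integral with fixed endpoints. -/
noncomputable def J (t α A B : ℝ) : ℝ := ∫ v in A..B, g t α v

lemma g_nonneg (ht : 0 < t) (α v : ℝ) : 0 ≤ g t α v := by
  unfold g; positivity

lemma g_le_one (ht : 0 < t) (α v : ℝ) : g t α v ≤ 1 := by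
  unfold g
  have h1 : (1:ℝ) ≤ 1 + |v| ^ (α / 2) / t :=
    le_add_of_nonneg_right (by positivity)
  exact inv_le_one_of_one_le₀ h1

lemma g_cont (ht : 0 < t) {α : ℝ} (hα : 0 ≤ α) : Continuous (g t α) := by
  unfold g
  have h1 : Continuous fun v : ℝ => |v| ^ (α / 2) :=
    continuous_abs.rpow_const fun v => Or.inr (by positivity)
  exact (continuous_const.add (h1.div_const t)).inv₀ fun v =>
    (add_pos_of_pos_of_nonneg one_pos (div_nonneg (Real.rpow_nonneg (abs_nonneg v) _) ht.le)).ne'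

lemma g_intble (ht : 0 < t) {α : ℝ} (hα : 0 ≤ α) (A B : ℝ) :
    IntervalIntegrable (g t α) volume A B :=
  (g_cont ht hα).intervalIntegrable A B

lemma J_nonneg (ht : 0 < t) {α A B : ℝ} (hAB : A ≤ B) : 0 ≤ J t α A B :=
  intervalIntegral.integral_nonneg hAB fun u _ => g_nonneg ht α u

lemma J_eq_sub (ht : 0 < t) {α : ℝ} (hα : 0 ≤ α) (A B : ℝ) :
    J t α A B = J t α 0 B - J t α 0 A := by
  unfold J
  rw [intervalIntegral.integral_interval_sub_left (g_intble ht hα 0 B) (g_intble ht hα 0 A)]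

lemma P_cont (ht : 0 < t) {α : ℝ} (hα : 0 ≤ α) : Continuous fun x => J t α 0 x :=
  intervalIntegral.continuous_primitive (fun a b => g_intble ht hα a b) 0

/-- Change of variables `u = v / t^(2/α)` in the inner integral. -/
lemma subst (ht : 0 < t) {α : ℝ} (hα : 0 < α) {c₁ c₂ : ℝ} (h₁ : 0 ≤ c₁) (h₂ : 0 ≤ c₂) :
    (∫ u in (c₁ / t ^ (2 / α))..(c₂ / t ^ (2 / α)), (1 + u ^ (α / 2))⁻¹)
      = (t ^ (2 / α))⁻¹ * J t α c₁ c₂ := by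
  have hT : (0:ℝ) < t ^ (2 / α) := Real.rpow_pos_of_pos ht _
  have h := intervalIntegral.integral_comp_div (a := c₁) (b := c₂)
    (fun u => (1 + u ^ (α / 2))⁻¹) hT.ne'
  have h2 : (∫ x in c₁..c₂, (1 + (x / t ^ (2 / α)) ^ (α / 2))⁻¹) = J t α c₁ c₂ := by
    unfold J
    apply intervalIntegral.integral_congr
    intro v hv
    have hv0 : 0 ≤ v := le_trans (le_min h₁ h₂) hv.1
    have hTt : (t ^ (2 / α)) ^ (α / 2) = t := by
      rw [← Real.rpow_mul ht.le]
      rw [show (2 / α) * (α / 2) = 1 by field_simp]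
      exact Real.rpow_one t
    unfold g
    show (1 + (v / t ^ (2 / α)) ^ (α / 2))⁻¹ = (1 + |v| ^ (α / 2) / t)⁻¹
    rw [abs_of_nonneg hv0, Real.div_rpow hv0 hT.le, hTt]
  rw [h2] at h
  rw [h]
  simp [smul_eq_mul]
  field_simp

lemma tendsto_rpow_two_div {c : ℝ} (hc : 0 < c) :
    Tendsto (fun α : ℝ => c ^ (2 / α)) (nhdsWithin 2 (Set.Ioi 2)) (nhds c) := by
  have h1 : Tendsto (fun α : ℝ => Real.exp (Real.log c * (2 / α))) (nhds 2)
      (nhds (Real.exp (Real.log c * (2 / 2)))) := by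
    apply (Real.continuous_exp.continuousAt).tendsto.comp
    exact (continuousAt_const.mul (continuousAt_const.div continuousAt_id two_ne_zero)).tendsto
  have h2 : Real.exp (Real.log c * (2 / 2)) = c := by
    norm_num [Real.exp_log hc]
  rw [h2] at h1
  exact Tendsto.congr (fun α => (Real.rpow_def_of_pos hc _).symm)
    (h1.mono_left nhdsWithin_le_nhds)

lemma g_tendsto (ht : 0 < t) {v : ℝ} (hv : 0 < v) :
    Tendsto (fun α => g t α v) (nhdsWithin 2 (Set.Ioi 2)) (nhds ((1 + v / t)⁻¹)) := by
  have h1 : Tendsto (fun α : ℝ => Real.exp (Real.log v * (α / 2))) (nhds 2)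
      (nhds (Real.exp (Real.log v * (2 / 2)))) := by
    apply (Real.continuous_exp.continuousAt).tendsto.comp
    exact (continuousAt_const.mul (continuousAt_id.div_const 2)).tendsto
  have h2 : Real.exp (Real.log v * (2 / 2)) = v := by
    norm_num [Real.exp_log hv]
  rw [h2] at h1
  have h3 : Tendsto (fun α : ℝ => v ^ (α / 2)) (nhds 2) (nhds v) :=
    h1.congr fun α => (Real.rpow_def_of_pos hv _).symm
  have h4 : Tendsto (fun α : ℝ => (1 + v ^ (α / 2) / t)⁻¹) (nhds 2) (nhds ((1 + v / t)⁻¹)) :=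
    Tendsto.inv₀ (tendsto_const_nhds.add (h3.div_const t)) (by positivity)
  exact (h4.mono_left nhdsWithin_le_nhds).congr fun α => by
    unfold g; rw [abs_of_pos hv]

lemma J_tendsto (ht : 0 < t) {A B : ℝ} (hA : 0 ≤ A) (hB : 0 ≤ B) :
    Tendsto (fun α => J t α A B) (nhdsWithin 2 (Set.Ioi 2))
      (nhds (t * Real.log ((t + B) / (t + A)))) := by
  have key : Tendsto (fun α => J t α A B) (nhdsWithin 2 (Set.Ioi 2))
      (nhds (∫ v in A..B, (1 + v / t)⁻¹)) := by
    unfold J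
    apply intervalIntegral.tendsto_integral_filter_of_dominated_convergence
      (bound := fun _ => (1:ℝ))
    · filter_upwards [self_mem_nhdsWithin] with α hα
      exact ((g_cont ht (by linarith [Set.mem_Ioi.mp hα] : (0:ℝ) ≤ α)).aestronglyMeasurable)
    · filter_upwards [self_mem_nhdsWithin] with α hα
      refine ae_of_all _ fun v hv => ?_
      rw [Real.norm_eq_abs, abs_of_nonneg (g_nonneg ht α v)]
      exact g_le_one ht α v
    · exact intervalIntegrable_const
    · refine ae_of_all _ fun v hv => ?_
      have hv0 : 0 < v := lt_of_le_of_lt (le_min hA hB) hv.1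
      exact g_tendsto ht hv0
  have hval : (∫ v in A..B, (1 + v / t)⁻¹) = t * Real.log ((t + B) / (t + A)) := by
    have h1 : (∫ v in A..B, (1 + v / t)⁻¹) = ∫ v in A..B, t * (t + v)⁻¹ := by
      apply intervalIntegral.integral_congr
      intro v hv
      show (1 + v / t)⁻¹ = t * (t + v)⁻¹
      rw [show (1 : ℝ) + v / t = (t + v) / t by field_simp, inv_div, div_eq_mul_inv]
    have h3 : (∫ v in A..B, (t + v)⁻¹) = ∫ x in (t + A)..(t + B), x⁻¹ :=
      intervalIntegral.integral_comp_add_left (fun x => x⁻¹) t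
    have h4 : (∫ x in (t + A)..(t + B), x⁻¹) = Real.log ((t + B) / (t + A)) := by
      apply integral_inv
      intro h
      have hmin : 0 < min (t + A) (t + B) := lt_min (by linarith) (by linarith)
      exact absurd h.1 (by linarith)
    rw [h1, intervalIntegral.integral_const_mul, h3, h4]
  rwa [hval] at key

end SirCovAux

open SirCovAux

private lemma alg1 {T : ℝ} (p q J₁ J₂ : ℝ) (hT : T ≠ 0) :
    1 + p * T * (T⁻¹ * J₁) + q * T * (T⁻¹ * J₂) = 1 + p * J₁ + q * J₂ := by
  field_simp

private lemma alg2 {T : ℝ} (q J₁ : ℝ) (hT : T ≠ 0) :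
    1 + q * T * (T⁻¹ * J₁) = 1 + q * J₁ := by
  field_simp

/-- The `α → 2⁺` simplification step producing the closed-form coverage expression (4) of
Proposition 1: the SIR coverage `G(α)` of a far-from-building user, with thinning factor
`p_a(α) = θ/(2π) + (1 − θ/(2π))(g_s/g_m)^{2/α}`, converges as `α → 2⁺` to the closed form
obtained by replacing the inner integrals `∫ (1 + u^{α/2})⁻¹ du` with logarithms. -/
theorem sir_coverage_tendsto_closed_form (lamb t Rβ RL gs gm θ : ℝ)
    (hlamb : 0 < lamb) (ht : 0 < t) (hRβ : 0 ≤ Rβ) (hRβRL : Rβ ≤ RL)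
    (hgs : 0 < gs) (hgsgm : gs ≤ gm) (hθ : θ ∈ Set.Ioc 0 (2 * π)) :
    Tendsto (fun α : ℝ =>
      (∫ r in (0 : ℝ)..Rβ, 2 * π * lamb * r *
        Real.exp (-(π * lamb * r ^ 2 *
          (1 + (θ / (2 * π) + (1 - θ / (2 * π)) * (gs / gm) ^ (2 / α)) * t ^ (2 / α) *
              (∫ u in (t ^ (-(2 / α)))..(Rβ ^ 2 / (r ^ 2 * t ^ (2 / α))),
                (1 + u ^ (α / 2))⁻¹) +
            (gs * t / gm) ^ (2 / α) *
              (∫ u in (Rβ ^ 2 / (r ^ 2 * t ^ (2 / α)))..(RL ^ 2 / (r ^ 2 * t ^ (2 / α))),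
                (1 + u ^ (α / 2))⁻¹))))) +
      ∫ r in Rβ..RL, 2 * π * lamb * r *
        Real.exp (-(π * lamb * r ^ 2 *
          (1 + (gs * t / gm) ^ (2 / α) *
            (∫ u in (t ^ (-(2 / α)))..(RL ^ 2 / (r ^ 2 * t ^ (2 / α))),
              (1 + u ^ (α / 2))⁻¹)))))
      (nhdsWithin 2 (Set.Ioi 2))
      (nhds
        ((∫ r in (0 : ℝ)..Rβ, 2 * π * lamb * r *
          Real.exp (-(π * lamb * r ^ 2 *
            (1 + (θ / (2 * π) + (1 - θ / (2 * π)) * (gs / gm)) * t *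
                Real.log ((t + Rβ ^ 2 / r ^ 2) / (1 + t)) +
              (gs / gm) * t *
                Real.log ((t + RL ^ 2 / r ^ 2) / (t + Rβ ^ 2 / r ^ 2)))))) +
        ∫ r in Rβ..RL, 2 * π * lamb * r *
          Real.exp (-(π * lamb * r ^ 2 *
            (1 + (gs / gm) * t * Real.log ((t + RL ^ 2 / r ^ 2) / (1 + t))))))) := by
  obtain ⟨hθ0, hθ2⟩ := hθ
  have hπ : (0:ℝ) < π := Real.pi_pos
  have hgm : 0 < gm := lt_of_lt_of_le hgs hgsgm
  have hc : 0 < gs / gm := div_pos hgs hgm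
  have hpnn : ∀ α : ℝ, 0 ≤ θ / (2 * π) + (1 - θ / (2 * π)) * (gs / gm) ^ (2 / α) := by
    intro α
    have h1 : 0 ≤ θ / (2 * π) := by positivity
    have h2 : θ / (2 * π) ≤ 1 := by
      rw [div_le_one (by positivity)]; exact hθ2
    have h3 : (0:ℝ) < (gs / gm) ^ (2 / α) := Real.rpow_pos_of_pos hc _
    nlinarith
  have hqnn : ∀ α : ℝ, 0 ≤ (gs / gm) ^ (2 / α) := fun α => (Real.rpow_pos_of_pos hc _).le
  -- Tendsto of the first (substituted) integral
  have T1 : Tendsto (fun α : ℝ => ∫ r in (0:ℝ)..Rβ, 2 * π * lamb * r *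
      Real.exp (-(π * lamb * r ^ 2 *
        (1 + (θ / (2 * π) + (1 - θ / (2 * π)) * (gs / gm) ^ (2 / α)) *
            J t α 1 (Rβ ^ 2 / r ^ 2) +
          (gs / gm) ^ (2 / α) * J t α (Rβ ^ 2 / r ^ 2) (RL ^ 2 / r ^ 2)))))
      (nhdsWithin 2 (Set.Ioi 2))
      (nhds (∫ r in (0 : ℝ)..Rβ, 2 * π * lamb * r *
        Real.exp (-(π * lamb * r ^ 2 *
          (1 + (θ / (2 * π) + (1 - θ / (2 * π)) * (gs / gm)) * t *
              Real.log ((t + Rβ ^ 2 / r ^ 2) / (1 + t)) +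
            (gs / gm) * t *
              Real.log ((t + RL ^ 2 / r ^ 2) / (t + Rβ ^ 2 / r ^ 2))))))) := by
    apply intervalIntegral.tendsto_integral_filter_of_dominated_convergence
      (bound := fun r => 2 * π * lamb * r)
    · -- measurability
      filter_upwards [self_mem_nhdsWithin] with α hα
      have hα0 : (0:ℝ) ≤ α := by
        have := Set.mem_Ioi.mp hα; linarith
      rw [Set.uIoc_of_le hRβ]
      apply ContinuousOn.aestronglyMeasurable _ measurableSet_Ioc
      have hB1 : ContinuousOn (fun r : ℝ => Rβ ^ 2 / r ^ 2) (Set.Ioc 0 Rβ) :=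
        continuousOn_const.div ((continuous_pow 2).continuousOn)
          fun r hr => pow_ne_zero 2 hr.1.ne'
      have hB2 : ContinuousOn (fun r : ℝ => RL ^ 2 / r ^ 2) (Set.Ioc 0 Rβ) :=
        continuousOn_const.div ((continuous_pow 2).continuousOn)
          fun r hr => pow_ne_zero 2 hr.1.ne'
      have hJ1 : ContinuousOn (fun r : ℝ => J t α 1 (Rβ ^ 2 / r ^ 2)) (Set.Ioc 0 Rβ) := by
        refine ContinuousOn.congr
          (f := fun r : ℝ => J t α 0 (Rβ ^ 2 / r ^ 2) - J t α 0 1)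
          (((P_cont ht hα0).comp_continuousOn hB1).sub continuousOn_const)
          fun r hr => ?_
        exact J_eq_sub ht hα0 1 _
      have hJ2 : ContinuousOn (fun r : ℝ => J t α (Rβ ^ 2 / r ^ 2) (RL ^ 2 / r ^ 2))
          (Set.Ioc 0 Rβ) := by
        refine ContinuousOn.congr
          (f := fun r : ℝ => J t α 0 (RL ^ 2 / r ^ 2) - J t α 0 (Rβ ^ 2 / r ^ 2))
          (((P_cont ht hα0).comp_continuousOn hB2).sub
            ((P_cont ht hα0).comp_continuousOn hB1))
          fun r hr => ?_
        exact J_eq_sub ht hα0 _ _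
      apply ContinuousOn.mul ((continuous_const.mul continuous_id).continuousOn)
      apply Real.continuous_exp.comp_continuousOn
      apply ContinuousOn.neg
      apply ContinuousOn.mul ((continuous_const.mul (continuous_pow 2)).continuousOn)
      exact (continuousOn_const.add (continuousOn_const.mul hJ1)).add
        (continuousOn_const.mul hJ2)
    · -- bound
      filter_upwards [self_mem_nhdsWithin] with α hα
      refine ae_of_all _ fun r hr => ?_
      rw [Set.uIoc_of_le hRβ] at hr
      obtain ⟨hr0, hrR⟩ := hr
      have hr2 : (0:ℝ) < r ^ 2 := by positivity
      have hJ1 : 0 ≤ J t α 1 (Rβ ^ 2 / r ^ 2) :=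
        J_nonneg ht ((one_le_div hr2).mpr (by nlinarith))
      have hJ2 : 0 ≤ J t α (Rβ ^ 2 / r ^ 2) (RL ^ 2 / r ^ 2) :=
        J_nonneg ht ((div_le_div_iff_of_pos_right hr2).mpr (by nlinarith))
      have hexp : Real.exp (-(π * lamb * r ^ 2 *
          (1 + (θ / (2 * π) + (1 - θ / (2 * π)) * (gs / gm) ^ (2 / α)) *
              J t α 1 (Rβ ^ 2 / r ^ 2) +
            (gs / gm) ^ (2 / α) * J t α (Rβ ^ 2 / r ^ 2) (RL ^ 2 / r ^ 2)))) ≤ 1 := by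
        rw [Real.exp_le_one_iff, neg_nonpos]
        have h1 : 0 ≤ (θ / (2 * π) + (1 - θ / (2 * π)) * (gs / gm) ^ (2 / α)) *
            J t α 1 (Rβ ^ 2 / r ^ 2) := mul_nonneg (hpnn α) hJ1
        have h2 : 0 ≤ (gs / gm) ^ (2 / α) * J t α (Rβ ^ 2 / r ^ 2) (RL ^ 2 / r ^ 2) :=
          mul_nonneg (hqnn α) hJ2
        have h3 : (0:ℝ) ≤ π * lamb * r ^ 2 := by positivity
        nlinarith
      rw [Real.norm_eq_abs, abs_of_nonneg
        (mul_nonneg (mul_nonneg (by positivity) hr0.le) (Real.exp_nonneg _))]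
      calc 2 * π * lamb * r * Real.exp _ ≤ 2 * π * lamb * r * 1 :=
            mul_le_mul_of_nonneg_left hexp (mul_nonneg (by positivity) hr0.le)
        _ = 2 * π * lamb * r := mul_one _
    · exact (continuous_const.mul continuous_id).intervalIntegrable 0 Rβ
    · -- pointwise limit
      refine ae_of_all _ fun r hr => ?_
      rw [Set.uIoc_of_le hRβ] at hr
      obtain ⟨hr0, hrR⟩ := hr
      have hq := tendsto_rpow_two_div hc
      have hp : Tendsto (fun α : ℝ => θ / (2 * π) + (1 - θ / (2 * π)) * (gs / gm) ^ (2 / α))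
          (nhdsWithin 2 (Set.Ioi 2))
          (nhds (θ / (2 * π) + (1 - θ / (2 * π)) * (gs / gm))) :=
        tendsto_const_nhds.add (tendsto_const_nhds.mul hq)
      have hJ1 : Tendsto (fun α => J t α 1 (Rβ ^ 2 / r ^ 2)) (nhdsWithin 2 (Set.Ioi 2))
          (nhds (t * Real.log ((t + Rβ ^ 2 / r ^ 2) / (t + 1)))) :=
        J_tendsto ht zero_le_one (by positivity)
      have hJ2 : Tendsto (fun α => J t α (Rβ ^ 2 / r ^ 2) (RL ^ 2 / r ^ 2))
          (nhdsWithin 2 (Set.Ioi 2))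
          (nhds (t * Real.log ((t + RL ^ 2 / r ^ 2) / (t + Rβ ^ 2 / r ^ 2)))) :=
        J_tendsto ht (by positivity) (by positivity)
      have hin : Tendsto (fun α : ℝ => 2 * π * lamb * r *
          Real.exp (-(π * lamb * r ^ 2 *
            (1 + (θ / (2 * π) + (1 - θ / (2 * π)) * (gs / gm) ^ (2 / α)) *
                J t α 1 (Rβ ^ 2 / r ^ 2) +
              (gs / gm) ^ (2 / α) * J t α (Rβ ^ 2 / r ^ 2) (RL ^ 2 / r ^ 2)))))
          (nhdsWithin 2 (Set.Ioi 2))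
          (nhds (2 * π * lamb * r *
            Real.exp (-(π * lamb * r ^ 2 *
              (1 + (θ / (2 * π) + (1 - θ / (2 * π)) * (gs / gm)) *
                  (t * Real.log ((t + Rβ ^ 2 / r ^ 2) / (t + 1))) +
                (gs / gm) * (t * Real.log ((t + RL ^ 2 / r ^ 2) / (t + Rβ ^ 2 / r ^ 2)))))))) := by
        apply Tendsto.const_mul
        apply (Real.continuous_exp.continuousAt.tendsto).comp
        apply Tendsto.neg
        apply Tendsto.const_mul
        exact (tendsto_const_nhds.add (hp.mul hJ1)).add (hq.mul hJ2)
      convert hin using 2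
      rw [add_comm (1:ℝ) t]
      ring
  -- Tendsto of the second (substituted) integral
  have T2 : Tendsto (fun α : ℝ => ∫ r in Rβ..RL, 2 * π * lamb * r *
      Real.exp (-(π * lamb * r ^ 2 *
        (1 + (gs / gm) ^ (2 / α) * J t α 1 (RL ^ 2 / r ^ 2)))))
      (nhdsWithin 2 (Set.Ioi 2))
      (nhds (∫ r in Rβ..RL, 2 * π * lamb * r *
        Real.exp (-(π * lamb * r ^ 2 *
          (1 + (gs / gm) * t * Real.log ((t + RL ^ 2 / r ^ 2) / (1 + t))))))) := by
    apply intervalIntegral.tendsto_integral_filter_of_dominated_convergence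
      (bound := fun r => 2 * π * lamb * r)
    · filter_upwards [self_mem_nhdsWithin] with α hα
      have hα0 : (0:ℝ) ≤ α := by
        have := Set.mem_Ioi.mp hα; linarith
      rw [Set.uIoc_of_le hRβRL]
      apply ContinuousOn.aestronglyMeasurable _ measurableSet_Ioc
      have hB2 : ContinuousOn (fun r : ℝ => RL ^ 2 / r ^ 2) (Set.Ioc Rβ RL) :=
        continuousOn_const.div ((continuous_pow 2).continuousOn)
          fun r hr => pow_ne_zero 2 (lt_of_le_of_lt hRβ hr.1).ne'
      have hJ1 : ContinuousOn (fun r : ℝ => J t α 1 (RL ^ 2 / r ^ 2)) (Set.Ioc Rβ RL) := by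
        refine ContinuousOn.congr
          (f := fun r : ℝ => J t α 0 (RL ^ 2 / r ^ 2) - J t α 0 1)
          (((P_cont ht hα0).comp_continuousOn hB2).sub continuousOn_const)
          fun r hr => ?_
        exact J_eq_sub ht hα0 1 _
      apply ContinuousOn.mul ((continuous_const.mul continuous_id).continuousOn)
      apply Real.continuous_exp.comp_continuousOn
      apply ContinuousOn.neg
      apply ContinuousOn.mul ((continuous_const.mul (continuous_pow 2)).continuousOn)
      exact continuousOn_const.add (continuousOn_const.mul hJ1)
    · filter_upwards [self_mem_nhdsWithin] with α hα
      refine ae_of_all _ fun r hr => ?_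
      rw [Set.uIoc_of_le hRβRL] at hr
      obtain ⟨hr0, hrR⟩ := hr
      have hr0' : (0:ℝ) < r := lt_of_le_of_lt hRβ hr0
      have hr2 : (0:ℝ) < r ^ 2 := by positivity
      have hJ1 : 0 ≤ J t α 1 (RL ^ 2 / r ^ 2) :=
        J_nonneg ht ((one_le_div hr2).mpr (by nlinarith))
      have hexp : Real.exp (-(π * lamb * r ^ 2 *
          (1 + (gs / gm) ^ (2 / α) * J t α 1 (RL ^ 2 / r ^ 2)))) ≤ 1 := by
        rw [Real.exp_le_one_iff, neg_nonpos]
        have h2 : 0 ≤ (gs / gm) ^ (2 / α) * J t α 1 (RL ^ 2 / r ^ 2) :=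
          mul_nonneg (hqnn α) hJ1
        have h3 : (0:ℝ) ≤ π * lamb * r ^ 2 := by positivity
        nlinarith
      rw [Real.norm_eq_abs, abs_of_nonneg
        (mul_nonneg (mul_nonneg (by positivity) hr0'.le) (Real.exp_nonneg _))]
      calc 2 * π * lamb * r * Real.exp _ ≤ 2 * π * lamb * r * 1 :=
            mul_le_mul_of_nonneg_left hexp (mul_nonneg (by positivity) hr0'.le)
        _ = 2 * π * lamb * r := mul_one _
    · exact (continuous_const.mul continuous_id).intervalIntegrable Rβ RL
    · refine ae_of_all _ fun r hr => ?_
      rw [Set.uIoc_of_le hRβRL] at hr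
      obtain ⟨hr0, hrR⟩ := hr
      have hq := tendsto_rpow_two_div hc
      have hJ1 : Tendsto (fun α => J t α 1 (RL ^ 2 / r ^ 2)) (nhdsWithin 2 (Set.Ioi 2))
          (nhds (t * Real.log ((t + RL ^ 2 / r ^ 2) / (t + 1)))) :=
        J_tendsto ht zero_le_one (by positivity)
      have hin : Tendsto (fun α : ℝ => 2 * π * lamb * r *
          Real.exp (-(π * lamb * r ^ 2 *
            (1 + (gs / gm) ^ (2 / α) * J t α 1 (RL ^ 2 / r ^ 2)))))
          (nhdsWithin 2 (Set.Ioi 2))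
          (nhds (2 * π * lamb * r *
            Real.exp (-(π * lamb * r ^ 2 *
              (1 + (gs / gm) * (t * Real.log ((t + RL ^ 2 / r ^ 2) / (t + 1)))))))) := by
        apply Tendsto.const_mul
        apply (Real.continuous_exp.continuousAt.tendsto).comp
        apply Tendsto.neg
        apply Tendsto.const_mul
        exact tendsto_const_nhds.add (hq.mul hJ1)
      convert hin using 2
      rw [add_comm (1:ℝ) t]
      ring
  -- Transfer along the eventual equality given by the change of variables
  refine Tendsto.congr' ?_ (T1.add T2)
  filter_upwards [self_mem_nhdsWithin] with α hα
  have hα2 : (2:ℝ) < α := Set.mem_Ioi.mp hα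
  have hα0 : (0:ℝ) < α := by linarith
  have hT : (0:ℝ) < t ^ (2 / α) := Real.rpow_pos_of_pos ht _
  have h3 : (gs * t / gm) ^ (2 / α) = (gs / gm) ^ (2 / α) * t ^ (2 / α) := by
    rw [show gs * t / gm = gs / gm * t by ring, Real.mul_rpow (by positivity) ht.le]
  have key : ∀ x y r : ℝ, x = y →
      2 * π * lamb * r * Real.exp (-(π * lamb * r ^ 2 * x)) =
      2 * π * lamb * r * Real.exp (-(π * lamb * r ^ 2 * y)) := fun x y r h => by rw [h]
  have hneg : t ^ (-(2 / α)) = 1 / t ^ (2 / α) := by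
    rw [Real.rpow_neg ht.le, one_div]
  congr 1
  · apply intervalIntegral.integral_congr
    intro r hr
    beta_reduce
    rw [hneg,
      show Rβ ^ 2 / (r ^ 2 * t ^ (2 / α)) = Rβ ^ 2 / r ^ 2 / t ^ (2 / α) from
        (div_div _ _ _).symm,
      show RL ^ 2 / (r ^ 2 * t ^ (2 / α)) = RL ^ 2 / r ^ 2 / t ^ (2 / α) from
        (div_div _ _ _).symm,
      subst ht hα0 (c₁ := 1) (c₂ := Rβ ^ 2 / r ^ 2) zero_le_one (by positivity),
      subst ht hα0 (c₁ := Rβ ^ 2 / r ^ 2) (c₂ := RL ^ 2 / r ^ 2) (by positivity)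
        (by positivity), h3]
    exact key _ _ r (alg1 _ _ _ _ hT.ne').symm
  · apply intervalIntegral.integral_congr
    intro r hr
    beta_reduce
    rw [hneg,
      show RL ^ 2 / (r ^ 2 * t ^ (2 / α)) = RL ^ 2 / r ^ 2 / t ^ (2 / α) from
        (div_div _ _ _).symm,
      subst ht hα0 (c₁ := 1) (c₂ := RL ^ 2 / r ^ 2) zero_le_one (by positivity), h3]
    exact key _ _ r (alg2 _ _ hT.ne').symm
end
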